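/- arXiv:1605.04747 — 3 statements merged into one kernel-verified Lean document; each statement's English description precedes it below -/
import Mathlib

section
/- Let 𝔣 be a finite-dimensional real simple Lie algebra whose Killing form is negative definite (i.e., 𝔣 is of compact type). Then every linear map Q : 𝔣 → 𝔣 that commutes with all adjoint operators, i.e., Q([X,Y]) = [X, Q(Y)] for all X, Y ∈ 𝔣, is a scalar multiple of the identity map: there exists c ∈ ℝ with Q = c·id. -/
/-!
Any `Q` commuting with the adjoint action satisfies `ad (Q x) = Q ∘ ad x` and `ad x ∘ Q = Q ∘ ad x`,
so `B (Q x) y = tr (Q ∘ ad x ∘ ad y) = B x (Q y)`: `Q` is automatically self-adjoint for the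
Killing form `B`. When `-B` is an inner product, `Q` therefore has a real eigenvalue `μ`. The
`μ`-eigenspace of `Q` is a nonzero ideal, hence all of `𝔣` by simplicity, i.e. `Q = μ • id`.
-/

open LieAlgebra Module.End

namespace LieAlgebra

section Commuting

variable {R L : Type*} [CommRing R] [LieRing L] [LieAlgebra R L]
  {Q : L →ₗ[R] L} (hQ : ∀ x y : L, Q ⁅x, y⁆ = ⁅x, Q y⁆)
include hQ

lemma ad_map_eq_comp_ad (x : L) : ad R L (Q x) = Q ∘ₗ ad R L x := by
  ext y
  rw [ad_apply, LinearMap.comp_apply, ad_apply, ← lie_skew, ← hQ, ← map_neg, lie_skew]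

lemma ad_comp_eq_comp_ad (x : L) : ad R L x ∘ₗ Q = Q ∘ₗ ad R L x := by
  ext y
  simp only [LinearMap.comp_apply, ad_apply, hQ]

lemma killingForm_map_left_eq_map_right [Module.Free R L] [Module.Finite R L] (x y : L) :
    killingForm R L (Q x) y = killingForm R L x (Q y) := by
  rw [killingForm_apply_apply, killingForm_apply_apply, ad_map_eq_comp_ad hQ,
    ad_map_eq_comp_ad hQ, ← LinearMap.comp_assoc, ad_comp_eq_comp_ad hQ, LinearMap.comp_assoc]

lemma IsSimple.eq_smul_id_of_hasEigenvalue [IsSimple R L] {μ : R} (hμ : HasEigenvalue Q μ) :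
    Q = μ • LinearMap.id := by
  let I : LieIdeal R L :=
    { toSubmodule := eigenspace Q μ
      lie_mem := fun {x m} hm => by
        have hm : Q m = μ • m := mem_eigenspace_iff.mp hm
        show ⁅x, m⁆ ∈ eigenspace Q μ
        rw [mem_eigenspace_iff, hQ, hm, lie_smul] }
  have hI : I = ⊤ := (IsSimple.eq_bot_or_eq_top I).resolve_left fun h =>
    hμ (congrArg LieSubmodule.toSubmodule h)
  ext x
  exact mem_eigenspace_iff.mp (hI ▸ LieSubmodule.mem_top x : x ∈ I)

end Commuting

end LieAlgebra

lemma LinearMap.BilinForm.exists_hasEigenvalue_of_posDef {V : Type*} [AddCommGroup V]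
    [Module ℝ V] [FiniteDimensional ℝ V] [Nontrivial V] {B : LinearMap.BilinForm ℝ V}
    (hB : B.IsSymm) (hpos : ∀ x, x ≠ 0 → 0 < B x x) {T : V →ₗ[ℝ] V}
    (hT : ∀ x y, B (T x) y = B x (T y)) :
    ∃ μ, HasEigenvalue T μ := by
  let core : InnerProductSpace.Core ℝ V :=
    { inner := fun x y => B x y
      conj_inner_symm := fun x y => hB.eq y x
      re_inner_nonneg := fun x => by
        rcases eq_or_ne x 0 with rfl | hx
        · simp
        · exact (hpos x hx).le
      add_left := fun x y z => by simp
      smul_left := fun x y r => by simp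
      definite := fun x hx => by
        by_contra h
        exact (hpos x h).ne' hx }
  let _ : NormedAddCommGroup V := core.toNormedAddCommGroup
  let _ : InnerProductSpace ℝ V := InnerProductSpace.ofCore core.toCore
  have hT_symm : T.IsSymmetric := hT
  exact ⟨_, hT_symm.hasEigenvalue_iSup_of_finiteDimensional⟩

/-- Every linear map on a finite-dimensional real simple Lie algebra
with negative definite Killing form that commutes with all adjoint operators
is a scalar multiple of the identity. -/
theorem stmt_0 (𝔣 : Type*) [LieRing 𝔣] [LieAlgebra ℝ 𝔣] [FiniteDimensional ℝ 𝔣]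
    (hsimple : LieAlgebra.IsSimple ℝ 𝔣)
    (hneg : ∀ X : 𝔣, X ≠ 0 → killingForm ℝ 𝔣 X X < 0)
    (Q : 𝔣 →ₗ[ℝ] 𝔣) (hQ : ∀ X Y : 𝔣, Q ⁅X, Y⁆ = ⁅X, Q Y⁆) :
    ∃ c : ℝ, Q = c • (LinearMap.id : 𝔣 →ₗ[ℝ] 𝔣) := by
  have := hsimple.nontrivial ℝ
  obtain ⟨μ, hμ⟩ := LinearMap.BilinForm.exists_hasEigenvalue_of_posDef
    (B := -killingForm ℝ 𝔣) (T := Q)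
    (LinearMap.BilinForm.isSymm_neg.mpr ⟨LieModule.traceForm_comm ℝ 𝔣 𝔣⟩)
    (fun x hx => neg_pos.mpr (hneg x hx))
    (fun x y => by simp only [LinearMap.neg_apply, killingForm_map_left_eq_map_right hQ])
  exact ⟨μ, hsimple.eq_smul_id_of_hasEigenvalue hQ hμ⟩
end

section
/- Let 𝔣 be a finite-dimensional real Lie algebra with negative definite Killing form B, let ⟨·,·⟩ = −B, and let X₁,…,X_p be a basis of 𝔣 that is orthonormal with respect to ⟨·,·⟩, where p = dim 𝔣. Then the structure constants C_{ab}^c = ⟨[X_a,X_b],X_c⟩ satisfy Σ_{a,b,c=1}^{p} (C_{ab}^c)² = p. -/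
/-!
Write `⟪x, y⟫ = -B(x, y)`. Orthonormality of the basis makes `⟪v, X c⟫` the `c`-th coordinate
of `v`, so the inner sum over `c` is `⟪[X a, X b], [X a, X b]⟫` by Parseval, and any trace is
`∑ b, ⟪T (X b), X b⟫`. Invariance of `B` turns `⟪[x, y], [x, y]⟫` into `B((ad x)² y, y)`; summing
over the basis gives `-tr((ad x)²) = ⟪x, x⟫`, which is `1` for `x = X a`, and there are `p`
values of `a`.
-/

open LinearMap

namespace Module.Basis

variable {R M ι : Type*} [CommRing R] [AddCommGroup M] [Module R M] [Fintype ι] [DecidableEq ι]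
  {B : M →ₗ[R] M →ₗ[R] R} (X : Basis ι R M)

lemma apply_eq_repr_of_orthonormal (hX : ∀ i j, B (X i) (X j) = if i = j then 1 else 0)
    (v : M) (j : ι) : B v (X j) = X.repr v j := by
  conv_lhs => rw [← X.sum_repr v]
  simp only [map_sum, map_smul, LinearMap.sum_apply, LinearMap.smul_apply, smul_eq_mul, hX,
    mul_ite, mul_one, mul_zero, Finset.sum_ite_eq', Finset.mem_univ, if_true]

lemma sum_sq_apply_eq_of_orthonormal (hX : ∀ i j, B (X i) (X j) = if i = j then 1 else 0)
    (v : M) : ∑ i, B v (X i) ^ 2 = B v v := by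
  calc ∑ i, B v (X i) ^ 2 = ∑ i, X.repr v i * B v (X i) := by
        simp [X.apply_eq_repr_of_orthonormal hX, sq]
    _ = B v (∑ i, X.repr v i • X i) := by simp only [map_sum, map_smul, smul_eq_mul]
    _ = B v v := by rw [X.sum_repr]

lemma trace_eq_sum_of_orthonormal (hX : ∀ i j, B (X i) (X j) = if i = j then 1 else 0)
    (T : M →ₗ[R] M) : trace R M T = ∑ i, B (T (X i)) (X i) := by
  simp only [trace_eq_matrix_trace R X, Matrix.trace, Matrix.diag_apply, LinearMap.toMatrix_apply,
    X.apply_eq_repr_of_orthonormal hX]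

end Module.Basis

lemma sum_neg_killingForm_lie_basis_of_orthonormal {R L ι : Type*} [CommRing R] [LieRing L]
    [LieAlgebra R L] [Fintype ι] [DecidableEq ι] (X : Module.Basis ι R L)
    (hX : ∀ i j, (-killingForm R L) (X i) (X j) = if i = j then 1 else 0) (x : L) :
    ∑ i, -killingForm R L ⁅x, X i⁆ ⁅x, X i⁆ = -killingForm R L x x := by
  have invariance (y : L) : -killingForm R L ⁅x, y⁆ ⁅x, y⁆ = killingForm R L ⁅x, ⁅x, y⁆⁆ y := by
    rw [LieModule.traceForm_apply_lie_apply', LieModule.traceForm_comm]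
    ring
  calc ∑ i, -killingForm R L ⁅x, X i⁆ ⁅x, X i⁆
      = -∑ i, (-killingForm R L) ((LieAlgebra.ad R L x ∘ₗ LieAlgebra.ad R L x) (X i)) (X i) := by
        simp [invariance]
    _ = -killingForm R L x x := by
        rw [← X.trace_eq_sum_of_orthonormal hX, ← killingForm_apply_apply]

theorem stmt_3_general (𝔣 : Type*) [LieRing 𝔣] [LieAlgebra ℝ 𝔣]
    (p : ℕ)
    (X : Module.Basis (Fin p) ℝ 𝔣)
    (horth : ∀ a b : Fin p,
      -(killingForm ℝ 𝔣 (X a) (X b)) = if a = b then 1 else 0) :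
    ∑ a : Fin p, ∑ b : Fin p, ∑ c : Fin p,
      (-(killingForm ℝ 𝔣 ⁅X a, X b⁆ (X c))) ^ 2 = (p : ℝ) := by
  have hX : ∀ a b, (-killingForm ℝ 𝔣) (X a) (X b) = if a = b then 1 else 0 := horth
  calc ∑ a, ∑ b, ∑ c, (-(killingForm ℝ 𝔣 ⁅X a, X b⁆ (X c))) ^ 2
      = ∑ a, ∑ b, -killingForm ℝ 𝔣 ⁅X a, X b⁆ ⁅X a, X b⁆ := by
        simp_rw [← LinearMap.neg_apply, X.sum_sq_apply_eq_of_orthonormal hX]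
    _ = ∑ a, -killingForm ℝ 𝔣 (X a) (X a) := by
        simp_rw [sum_neg_killingForm_lie_basis_of_orthonormal X hX]
    _ = p := by simp [horth]

/-- For an orthonormal basis (w.r.t. the minus Killing form) of a
compact-type Lie algebra of dimension p, the squared structure constants sum to p. -/
theorem stmt_3 (𝔣 : Type*) [LieRing 𝔣] [LieAlgebra ℝ 𝔣] [FiniteDimensional ℝ 𝔣]
    (hneg : ∀ X : 𝔣, X ≠ 0 → killingForm ℝ 𝔣 X X < 0)
    (p : ℕ) (hp : p = Module.finrank ℝ 𝔣)
    (X : Module.Basis (Fin p) ℝ 𝔣)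
    (horth : ∀ a b : Fin p,
      -(killingForm ℝ 𝔣 (X a) (X b)) = if a = b then 1 else 0) :
    ∑ a : Fin p, ∑ b : Fin p, ∑ c : Fin p,
      (-(killingForm ℝ 𝔣 ⁅X a, X b⁆ (X c))) ^ 2 = (p : ℝ) :=
  stmt_3_general 𝔣 p X horth
end

section
/- Define S̃ : ℝ³ → ℝ by S̃(x,y,u) = x² + y² − u⁴x² + 2u³xy − u²y². Then the set of triples (x,y,u) ∈ ℝ³ with x > 0 and y > 0 satisfying the system x·∂S̃/∂x = 2, y·∂S̃/∂y = 2, ∂S̃/∂u = 0 is exactly the four-element set {(1,1,0), (1,1,1), (√2/2, √2, 1), (3/√10, √(6/5), √3/3)}. -/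
/-- The (normalized) scalar curvature function for n = 2. -/
noncomputable def Stilde (x y u : ℝ) : ℝ :=
  x ^ 2 + y ^ 2 - u ^ 4 * x ^ 2 + 2 * u ^ 3 * x * y - u ^ 2 * y ^ 2

lemma dX (x y u : ℝ) : deriv (fun t => Stilde t y u) x = 2*x - 2*u^4*x + 2*u^3*y := by
  have h : (fun t => Stilde t y u)
      = fun t : ℝ => (1 - u^4)*t^2 + (2*u^3*y)*t + (y^2 - u^2*y^2) := by
    funext t; simp only [Stilde]; ring
  rw [h]
  have H : HasDerivAt (fun t : ℝ => (1 - u^4)*t^2 + (2*u^3*y)*t + (y^2 - u^2*y^2))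
      ((1-u^4)*(2*x^1) + (2*u^3*y)*1) x :=
    (((hasDerivAt_pow 2 x).const_mul _).add ((hasDerivAt_id x).const_mul _)).add_const _
  rw [H.deriv]; ring

lemma dY (x y u : ℝ) : deriv (fun t => Stilde x t u) y = 2*y + 2*u^3*x - 2*u^2*y := by
  have h : (fun t => Stilde x t u)
      = fun t : ℝ => (1 - u^2)*t^2 + (2*u^3*x)*t + (x^2 - u^4*x^2) := by
    funext t; simp only [Stilde]; ring
  rw [h]
  have H : HasDerivAt (fun t : ℝ => (1 - u^2)*t^2 + (2*u^3*x)*t + (x^2 - u^4*x^2))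
      ((1-u^2)*(2*y^1) + (2*u^3*x)*1) y :=
    (((hasDerivAt_pow 2 y).const_mul _).add ((hasDerivAt_id y).const_mul _)).add_const _
  rw [H.deriv]; ring

lemma dU (x y u : ℝ) : deriv (fun t => Stilde x y t) u = -4*u^3*x^2 + 6*u^2*x*y - 2*u*y^2 := by
  have h : (fun t => Stilde x y t)
      = fun t : ℝ => ((-(x^2))*t^4 + (2*x*y)*t^3 + (-(y^2))*t^2) + (x^2 + y^2) := by
    funext t; simp only [Stilde]; ring
  rw [h]
  have H : HasDerivAt (fun t : ℝ => ((-(x^2))*t^4 + (2*x*y)*t^3 + (-(y^2))*t^2))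
      ((-(x^2))*(4*u^3) + (2*x*y)*(3*u^2) + (-(y^2))*(2*u^1)) u :=
    (((hasDerivAt_pow 4 u).const_mul _).add ((hasDerivAt_pow 3 u).const_mul _)).add
      ((hasDerivAt_pow 2 u).const_mul _)
  rw [(H.add_const _).deriv]; ring

lemma eqps {a b : ℝ} (ha : 0 < a) (hb : 0 < b) (h : a^2 = b^2) : a = b := by
  have h2 : (a - b) * (a + b) = 0 := by linear_combination h
  rcases mul_eq_zero.mp h2 with h3 | h3
  · linarith
  · linarith

lemma sol4 (x y u : ℝ) (hp : x^2 = 9/10) (hq : u^2 = 1/3) (hr : u*x*y = 3/5)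
    (hs : y^2 = 6/5) :
    x*(2*x - 2*u^4*x + 2*u^3*y) = 2 ∧ y*(2*y + 2*u^3*x - 2*u^2*y) = 2 ∧
      -4*u^3*x^2 + 6*u^2*x*y - 2*u*y^2 = 0 := by
  refine ⟨?_, ?_, ?_⟩
  · linear_combination (2 - 2*u^4)*hp + ((6/5 : ℝ) - (9/5)*(u^2+1/3))*hq + 2*u^2*hr
  · linear_combination (2 - 2*u^2)*hs + (-(6/5 : ℝ))*hq + 2*u^2*hr
  · linear_combination (-4*u^3)*hp + (-(18/5)*u)*hq + (-2*u)*hs + 6*u*hr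

/-- The solution set of the system x·∂S̃/∂x = 2, y·∂S̃/∂y = 2,
∂S̃/∂u = 0 with x, y > 0 consists of exactly the four indicated triples. -/
theorem stmt_7 :
    {p : ℝ × ℝ × ℝ | 0 < p.1 ∧ 0 < p.2.1 ∧
        p.1 * deriv (fun t => Stilde t p.2.1 p.2.2) p.1 = 2 ∧
        p.2.1 * deriv (fun t => Stilde p.1 t p.2.2) p.2.1 = 2 ∧
        deriv (fun t => Stilde p.1 p.2.1 t) p.2.2 = 0} =
      ({((1 : ℝ), (1 : ℝ), (0 : ℝ)), (1, 1, 1),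
        (Real.sqrt 2 / 2, Real.sqrt 2, 1),
        (3 / Real.sqrt 10, Real.sqrt (6 / 5), Real.sqrt 3 / 3)} :
          Set (ℝ × ℝ × ℝ)) := by
  have s2 : Real.sqrt 2 ^ 2 = 2 := Real.sq_sqrt (by norm_num)
  have s2p : (0:ℝ) < Real.sqrt 2 := Real.sqrt_pos.mpr (by norm_num)
  have s10 : Real.sqrt 10 ^ 2 = 10 := Real.sq_sqrt (by norm_num)
  have s10p : (0:ℝ) < Real.sqrt 10 := Real.sqrt_pos.mpr (by norm_num)
  have s65 : Real.sqrt (6/5) ^ 2 = 6/5 := Real.sq_sqrt (by norm_num)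
  have s65p : (0:ℝ) < Real.sqrt (6/5) := Real.sqrt_pos.mpr (by norm_num)
  have s3 : Real.sqrt 3 ^ 2 = 3 := Real.sq_sqrt (by norm_num)
  have s3p : (0:ℝ) < Real.sqrt 3 := Real.sqrt_pos.mpr (by norm_num)
  have hX2 : (3 / Real.sqrt 10)^2 = (9/10 : ℝ) := by rw [div_pow, s10]; norm_num
  have hU2 : (Real.sqrt 3 / 3)^2 = (1/3 : ℝ) := by rw [div_pow, s3]; norm_num
  have hUXY : (Real.sqrt 3 / 3) * (3 / Real.sqrt 10) * Real.sqrt (6/5) = 3/5 := by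
    refine eqps (by positivity) (by norm_num) ?_
    rw [mul_pow, mul_pow, div_pow, div_pow, s3, s10, s65]
    norm_num
  ext ⟨x, y, u⟩
  simp only [Set.mem_setOf_eq, Set.mem_insert_iff, Set.mem_singleton_iff, Prod.mk.injEq,
    dX, dY, dU]
  constructor
  · rintro ⟨hx, hy, h1, h2, h3⟩
    have e3 : u * ((2*u*x - y) * (u*x - y)) = 0 := by linear_combination (-1/2 : ℝ) * h3
    rcases mul_eq_zero.mp e3 with hu | hf
    · subst hu
      have hx1 : x = 1 := eqps hx one_pos (by linear_combination (1/2 : ℝ) * h1)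
      have hy1 : y = 1 := eqps hy one_pos (by linear_combination (1/2 : ℝ) * h2)
      exact Or.inl ⟨hx1, hy1, rfl⟩
    rcases mul_eq_zero.mp hf with hc | hc
    · -- y = 2ux
      have hyv : y = 2*u*x := by linarith
      subst hyv
      have hup : 0 < u := by nlinarith
      have ha : x^2 * (1 + u^4) = 1 := by linear_combination (1/2 : ℝ) * h1
      have hb : x^2 * (4*u^2 - 2*u^4) = 1 := by linear_combination (1/2 : ℝ) * h2
      have hx2p : 0 < x^2 := by positivity
      have h4 : 1 + u^4 = 4*u^2 - 2*u^4 :=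
        mul_left_cancel₀ (ne_of_gt hx2p) (by rw [ha, hb])
      have hq : (u^2 - 1) * (3*u^2 - 1) = 0 := by linear_combination h4
      rcases mul_eq_zero.mp hq with hu2 | hu2
      · have hu1 : u = 1 := eqps hup one_pos (by linarith)
        subst hu1
        have hx2 : x^2 = 1/2 := by linear_combination (1/2 : ℝ) * ha
        have hxv : x = Real.sqrt 2 / 2 :=
          eqps hx (by positivity) (by linear_combination hx2 - (1/4 : ℝ) * s2)
        refine Or.inr (Or.inr (Or.inl ⟨hxv, ?_, rfl⟩))
        rw [hxv]; ring
      · have hu2' : u^2 = 1/3 := by linarith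
        have huv : u = Real.sqrt 3 / 3 :=
          eqps hup (by positivity) (by rw [hU2]; exact hu2')
        have hx2 : x^2 = 9/10 := by
          linear_combination (9/10 : ℝ)*ha + (-3*x^2/10)*(1+3*u^2)*hu2'
        have hxv : x = 3 / Real.sqrt 10 := eqps hx (by positivity) (by rw [hX2]; exact hx2)
        have hyv2 : 2*u*x = Real.sqrt (6/5) := by
          refine eqps (by positivity) s65p ?_
          rw [s65]; linear_combination (4*x^2)*hu2' + (4/3 : ℝ)*hx2
        exact Or.inr (Or.inr (Or.inr ⟨hxv, hyv2, huv⟩))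
    · -- y = ux
      have hyv : y = u*x := by linarith
      subst hyv
      have hup : 0 < u := by nlinarith
      have hx1 : x = 1 := eqps hx one_pos (by linear_combination (1/2 : ℝ) * h1)
      subst hx1
      have hu1 : u = 1 := eqps hup one_pos (by linear_combination (1/2 : ℝ) * h2)
      subst hu1
      exact Or.inr (Or.inl ⟨rfl, by norm_num, rfl⟩)
  · rintro (⟨hx, hy, hu⟩ | ⟨hx, hy, hu⟩ | ⟨hx, hy, hu⟩ | ⟨hx, hy, hu⟩) <;>
      subst hx <;> subst hy <;> subst hu
    · norm_num
    · norm_num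
    · refine ⟨by positivity, s2p, ?_, ?_, ?_⟩
      · linear_combination s2
      · linear_combination s2
      · ring
    · obtain ⟨e1, e2, e3⟩ := sol4 (3 / Real.sqrt 10) (Real.sqrt (6/5)) (Real.sqrt 3 / 3)
        hX2 hU2 hUXY s65
      exact ⟨by positivity, s65p, e1, e2, e3⟩
end
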